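/- arXiv:2012.02758 — 2 statements merged into one kernel-verified Lean document; each statement's English description precedes it below -/
import Mathlib

section
/- Let A = ⟨a_α : α < ω₁⟩ be a proper coherent sequence of subsets of ℕ with the ScP. If S ⊆ ω₁ is a cover (⋃_{γ∈S} â_γ = ω₁), then for every stationary S' ⊆ ω₁ there is a finite F ⊆ S such that S' ∪ F is a cover (⋃_{γ ∈ S' ∪ F} â_γ = ω₁). -/
open Set

noncomputable section

/-- The least uncountable ordinal `ω₁`. -/
def omega1 : Ordinal := (Cardinal.aleph 1).ord

/-- `⋃_{γ ∈ F} a_γ` for a finite set `F` of indices. -/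
def unionFin (a : Ordinal → Set ℕ) (F : Finset Ordinal) : Set ℕ :=
  ⋃ γ ∈ F, a γ

/-- A sequence of subsets of `ℕ`, with indices from a (downward closed) domain `D`
of ordinals, is coherent if for all `α ≤ β` in the domain there is a finite `F ⊆ α`
with `a α ∩ a β ⊆ ⋃_{γ∈F} a γ` or `a α ⊆ a β ∪ ⋃_{γ∈F} a γ`. -/
def CoherentOn (D : Set Ordinal) (a : Ordinal → Set ℕ) : Prop :=
  ∀ α β : Ordinal, α ≤ β → β ∈ D →
    ∃ F : Finset Ordinal, (∀ γ ∈ F, γ < α) ∧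
      (a α ∩ a β ⊆ unionFin a F ∨ a α ⊆ a β ∪ unionFin a F)

/-- Properness: no `a β` is contained in a finite union of earlier terms. -/
def ProperOn (D : Set Ordinal) (a : Ordinal → Set ℕ) : Prop :=
  ∀ β ∈ D, ∀ F : Finset Ordinal, (∀ γ ∈ F, γ < β) → ¬ a β ⊆ unionFin a F

/-- `â_β = { α ≤ β : a α ∖ a β ⊆ ⋃_{γ∈F} a γ for some finite F ⊆ α }`. -/
def hatA (a : Ordinal → Set ℕ) (β : Ordinal) : Set Ordinal :=
  { α | α ≤ β ∧ ∃ F : Finset Ordinal, (∀ γ ∈ F, γ < α) ∧ a α \ a β ⊆ unionFin a F }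

/-- The topology `τ(A)` on `λ + 1 = {α : α ≤ λ}` generated by the subbase
consisting of the sets `â_β` and their complements, `β < λ`. -/
def tau (lam : Ordinal) (a : Ordinal → Set ℕ) :
    TopologicalSpace {α : Ordinal // α ≤ lam} :=
  TopologicalSpace.generateFrom
    { s | ∃ β < lam, s = {x : {α : Ordinal // α ≤ lam} | x.1 ∈ hatA a β} ∨
                     s = {x : {α : Ordinal // α ≤ lam} | x.1 ∈ hatA a β}ᶜ }

/-- The subspace `ω₁ = {α : α < ω₁}` of `(ω₁+1, τ(A))`. -/
def tauSub (a : Ordinal → Set ℕ) : TopologicalSpace {y : Ordinal // y < omega1} :=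
  TopologicalSpace.induced
    (fun y : {y : Ordinal // y < omega1} => (⟨y.1, y.2.le⟩ : {α : Ordinal // α ≤ omega1}))
    (tau omega1 a)

/-- Closed unbounded subsets of `ω₁`. -/
def IsClubOmega1 (C : Set Ordinal) : Prop :=
  C ⊆ Iio omega1 ∧
  (∀ α < omega1, ∃ β ∈ C, α ≤ β) ∧
  (∀ δ, δ < omega1 → δ ≠ 0 → (∀ α < δ, ∃ β ∈ C, α < β ∧ β < δ) → δ ∈ C)

/-- Stationary subsets of `ω₁`: sets meeting every club. -/
def IsStationaryOmega1 (S : Set Ordinal) : Prop :=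
  ∀ C : Set Ordinal, IsClubOmega1 C → (S ∩ C).Nonempty

/-- The stationary covering property for a coherent sequence whose index domain is `D`:
if the sequence has length `ω₁` (i.e. `Iio ω₁ ⊆ D`), then every stationary `S ⊆ ω₁`
together with some finite `F` covers, i.e. `⋃_{γ ∈ S ∪ F} â_γ = ω₁`.  (Sequences of
length `< ω₁` have the ScP by convention.) -/
def HasScP (D : Set Ordinal) (a : Ordinal → Set ℕ) : Prop :=
  Iio omega1 ⊆ D →
    ∀ S : Set Ordinal, S ⊆ Iio omega1 → IsStationaryOmega1 S →
      ∃ F : Finset Ordinal, (⋃ γ ∈ S ∪ (↑F : Set Ordinal), hatA a γ) = Iio omega1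

/-- A node of the tree `2^{≤ω₁}`: a function `val` defined on the ordinals `< len`
(with the canonical value `false` beyond `len`). -/
structure Node where
  len : Ordinal
  val : Ordinal → Bool
  canon : ∀ α, len ≤ α → val α = false

open Classical in
/-- The restriction `x ↾ β`. -/
def Node.restrict (x : Node) (β : Ordinal) : Node where
  len := β
  val := fun α => if α < β then x.val α else false
  canon := fun α h => if_neg (not_lt.2 h)

/-- `τ.Extends σ` means `σ ⊆ τ`, i.e. `τ` extends `σ`. -/
def Node.Extends (τ σ : Node) : Prop :=
  σ.len ≤ τ.len ∧ ∀ α < σ.len, τ.val α = σ.val α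

/-- Successor ordinals. -/
def IsSucc (o : Ordinal) : Prop := ∃ β, o = β + 1

open Classical in
/-- `σ†`: if `σ` has successor length `β+1`, the node agreeing with `σ` except at `β`;
otherwise `σ` itself. -/
def Node.dagger (σ : Node) : Node :=
  if h : IsSucc σ.len then
    { len := σ.len
      val := fun α => if α = Classical.choose h then !(σ.val α) else σ.val α
      canon := by
        intro α hα
        have hs := Classical.choose_spec h
        have hne : α ≠ Classical.choose h := by
          intro he
          rw [hs, he] at hα
          rw [Ordinal.add_one_eq_succ] at hα
          exact absurd hα (not_le.2 (Order.lt_succ (Classical.choose h)))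
        show (if α = Classical.choose h then !(σ.val α) else σ.val α) = false
        rw [if_neg hne]
        exact σ.canon α hα }
  else σ

open Classical in
/-- `σ ⌢ b` : the node `σ` extended by one value `b`. -/
def Node.snoc (σ : Node) (b : Bool) : Node where
  len := σ.len + 1
  val := fun α => if α = σ.len then b else σ.val α
  canon := by
    intro α hα
    have h1 : σ.len < α := by
      have h2 : σ.len < σ.len + 1 := by
        rw [Ordinal.add_one_eq_succ]; exact Order.lt_succ σ.len
      exact lt_of_lt_of_le h2 hα
    show (if α = σ.len then b else σ.val α) = false
    rw [if_neg h1.ne']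
    exact σ.canon α h1.le

open Classical in
/-- `x ⌢ σ` : concatenation of nodes. -/
def Node.append (x σ : Node) : Node where
  len := x.len + σ.len
  val := fun α => if α < x.len then x.val α else σ.val (α - x.len)
  canon := by
    intro α hα
    have h1 : ¬ α < x.len := not_lt.2 (le_trans (le_self_add : x.len ≤ x.len + σ.len) hα)
    show (if α < x.len then x.val α else σ.val (α - x.len)) = false
    rw [if_neg h1]
    apply σ.canon
    by_contra h2
    rw [not_le] at h2
    have h3 : α ≤ x.len + (α - x.len) := Ordinal.le_add_sub α x.len
    have h4 : x.len + (α - x.len) < x.len + σ.len := (add_lt_add_iff_left x.len).2 h2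
    exact absurd hα (not_le.2 (lt_of_le_of_lt h3 h4))

/-- A subtree of `2^{<ω₁}` that is downward closed, twinned and has no maximal elements. -/
structure GoodTree (Γ : Set Node) : Prop where
  lt_omega1 : ∀ σ ∈ Γ, σ.len < omega1
  downward : ∀ σ ∈ Γ, ∀ β ≤ σ.len, σ.restrict β ∈ Γ
  twinned : ∀ σ ∈ Γ, σ.dagger ∈ Γ
  noMax : ∀ σ ∈ Γ, ∃ τ ∈ Γ, σ.len < τ.len ∧ τ.Extends σ

/-- `X(Γ)`: the maximal branches of `Γ`, i.e. the minimal elements of `2^{≤ω₁} ∖ Γ`. -/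
def XGamma (Γ : Set Node) : Set Node :=
  { x | x.len ≤ omega1 ∧ x ∉ Γ ∧ ∀ β < x.len, x.restrict β ∈ Γ }

/-- The index domain of the branch sequence `A_{Γ,x}`. -/
def branchDomain (Γ : Set Node) (x : Node) : Set Ordinal :=
  { α | α + 1 ≤ x.len ∧ x.restrict (α + 1) ∈ Γ }

/-- The branch sequence `A_{Γ,x}`, `a^x_α = a_{x ↾ (α+1)}`. -/
def branchSeq (a : Node → Set ℕ) (x : Node) : Ordinal → Set ℕ :=
  fun α => a (x.restrict (α + 1))

/-- A `𝕋`-algebra on the tree `Γ`. -/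
structure IsTAlgebra (Γ : Set Node) (a : Node → Set ℕ) : Prop where
  tree : GoodTree Γ
  empty_of_not_succ : ∀ σ ∈ Γ, ¬ IsSucc σ.len → a σ = ∅
  compl_dagger : ∀ σ ∈ Γ, IsSucc σ.len → a σ.dagger = (a σ)ᶜ
  branch_coherent : ∀ x : Node, x.len ≤ omega1 →
    CoherentOn (branchDomain Γ x) (branchSeq a x)
  branch_proper : ∀ x : Node, x.len ≤ omega1 →
    ProperOn (branchDomain Γ x) (branchSeq a x)

/-- The Boolean subalgebra of `P(ℕ)` generated by a family `G`. -/
inductive GenBool (G : Set (Set ℕ)) : Set ℕ → Prop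
  | basic (s : Set ℕ) : s ∈ G → GenBool G s
  | empty : GenBool G ∅
  | compl (s : Set ℕ) : GenBool G s → GenBool G sᶜ
  | inter (s t : Set ℕ) : GenBool G s → GenBool G t → GenBool G (s ∩ t)

/-- `B_Γ`: the Boolean subalgebra of `P(ℕ)` generated by `{a_σ : σ ∈ Γ}`. -/
def BGamma (Γ : Set Node) (a : Node → Set ℕ) : Set (Set ℕ) :=
  { b | GenBool { s | ∃ σ ∈ Γ, s = a σ } b }

/-- A finite intersection from the family `{ℕ ∖ a_{x↾(α+1)} : α + 1 ≤ λ_x}`. -/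
def finInterCompl (a : Node → Set ℕ) (x : Node) (F : Finset Ordinal) : Set ℕ :=
  ⋂ α ∈ F, (a (x.restrict (α + 1)))ᶜ

/-- The ultrafilter `U_x` on `B_Γ` generated by the finite intersections of
`{ℕ ∖ a_{x↾(α+1)} : α + 1 ≤ λ_x}`. -/
def Ux (Γ : Set Node) (a : Node → Set ℕ) (x : Node) : Set (Set ℕ) :=
  { b | b ∈ BGamma Γ a ∧
    ∃ F : Finset Ordinal, (∀ α ∈ F, α + 1 ≤ x.len) ∧ finInterCompl a x F ⊆ b }

/-- The Stone topology on `X(Γ)`, with subbasic open sets `{z : b ∈ U_z}`, `b ∈ B_Γ`. -/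
def stoneTop (Γ : Set Node) (a : Node → Set ℕ) :
    TopologicalSpace {z : Node // z ∈ XGamma Γ} :=
  TopologicalSpace.generateFrom
    { s | ∃ b ∈ BGamma Γ a, s = { z : {z : Node // z ∈ XGamma Γ} | b ∈ Ux Γ a z.1 } }

/-- An ultrafilter on a Boolean subalgebra `B` of `P(ℕ)`. -/
def IsUltrafilterOn (B U : Set (Set ℕ)) : Prop :=
  U ⊆ B ∧
  (∀ s ∈ U, ∀ t ∈ U, s ∩ t ∈ U) ∧
  (∀ s ∈ U, ∀ t ∈ B, s ⊆ t → t ∈ U) ∧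
  ∅ ∉ U ∧
  (∀ b ∈ B, Xor' (b ∈ U) (bᶜ ∈ U))

/-- The length-lexicographic (strict) order on finite binary strings. -/
def LenLexLT (σ τ : Node) : Prop :=
  σ.len < τ.len ∨ (σ.len = τ.len ∧ ∃ i < σ.len, σ.val i = false ∧ τ.val i = true ∧
    ∀ j < i, σ.val j = τ.val j)

/-- `e` is the standard length-lexicographic enumeration of `2^{<ω}`. -/
def IsStdEnum (e : ℕ → Node) : Prop :=
  (∀ k, (e k).len < Ordinal.omega0) ∧
  (∀ σ : Node, σ.len < Ordinal.omega0 → ∃ k, e k = σ) ∧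
  (∀ k l : ℕ, k < l → LenLexLT (e k) (e l))

/-- `⋃_{k<n} c^x_k` where `c^x_n = a^x_{e(n)} ∖ ⋃_{k<n} c^x_k` (recursively). -/
def cUnion (a : Node → Set ℕ) (x : Node) (eb : ℕ → Ordinal) : ℕ → Set ℕ
  | 0 => ∅
  | n + 1 => cUnion a x eb n ∪ (a (x.restrict (eb n + 1)) \ cUnion a x eb n)

/-- `c^x_n = a^x_{e(n)} ∖ ⋃_{k<n} c^x_k`. -/
def cSeq (a : Node → Set ℕ) (x : Node) (eb : ℕ → Ordinal) (n : ℕ) : Set ℕ :=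
  a (x.restrict (eb n + 1)) \ cUnion a x eb n

/-- `{x ⌢ σ : σ ∈ 2^{<ω}}`. -/
def appendSet (x : Node) : Set Node :=
  { τ | ∃ σ : Node, σ.len < Ordinal.omega0 ∧ τ = x.append σ }

/-- The defining equations of the extension `A_Γ[π,x]`:
`a_x = ∅`, `a_{x⌢(σ⌢0)} = ⋃{c^x_k : σ⌢1 ⊆ σ_{π(k)}}`, `a_{x⌢(σ⌢1)} = ℕ ∖ a_{x⌢(σ⌢0)}`. -/
def ExtEquations (e : ℕ → Node) (π : ℕ → ℕ) (a : Node → Set ℕ) (x : Node)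
    (eb : ℕ → Ordinal) (a' : Node → Set ℕ) : Prop :=
  a' x = ∅ ∧
  ∀ σ : Node, σ.len < Ordinal.omega0 →
    (a' (x.append (σ.snoc false)) =
      ⋃ k ∈ { k : ℕ | (e (π k)).Extends (σ.snoc true) }, cSeq a x eb k) ∧
    (a' (x.append (σ.snoc true)) = (a' (x.append (σ.snoc false)))ᶜ)

/-- The full tree `2^{<ω₁}`. -/
def GammaFull : Set Node := { σ | σ.len < omega1 }

theorem natLtOmega1 (n : ℕ) : (n : Ordinal) < omega1 := by
  have h1 : (n : Ordinal) < Ordinal.omega0 := Ordinal.nat_lt_omega0 n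
  have h2 : Ordinal.omega0 < omega1 := by
    rw [omega1, ← Cardinal.ord_aleph0]
    exact Cardinal.ord_lt_ord.2 (by rw [← Cardinal.aleph_zero]
                                    exact Cardinal.aleph_lt_aleph.2 zero_lt_one)
  exact h1.trans h2

/-! Coherence propagates covers: if `γ ∈ â_δ` because
`a_γ ∖ a_δ ⊆ ⋃_{κ∈K} a_κ`, then `â_γ ⊆ â_δ ∪ ⋃_{κ∈K} â_κ`. Since `K ⊆ γ`, induction on `γ`
shows that every `â_γ`, `γ < ω₁`, is covered by finitely many `â_δ` with `δ` in the cover `S`.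
Given a stationary `S'`, the ScP supplies a finite `F₀` with `S' ∪ F₀` a cover, and replacing
each `â_γ`, `γ ∈ F₀`, by its finite cover from `S` gives the required `F ⊆ S`. -/

def FinitelyCovered {ι α : Type*} (f : ι → Set α) (S : Set ι) (X : Set α) : Prop :=
  ∃ F : Finset ι, ↑F ⊆ S ∧ X ⊆ ⋃ i ∈ F, f i

namespace FinitelyCovered

variable {ι α : Type*} {f : ι → Set α} {S : Set ι} {X Y : Set α}

lemma of_mem {i : ι} (hi : i ∈ S) : FinitelyCovered f S (f i) :=
  ⟨{i}, by simpa using hi, by simp⟩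

lemma mono (h : FinitelyCovered f S Y) (hXY : X ⊆ Y) : FinitelyCovered f S X :=
  let ⟨F, hFS, hY⟩ := h
  ⟨F, hFS, hXY.trans hY⟩

lemma union [DecidableEq ι] (hX : FinitelyCovered f S X) (hY : FinitelyCovered f S Y) :
    FinitelyCovered f S (X ∪ Y) := by
  obtain ⟨F, hFS, hF⟩ := hX
  obtain ⟨G, hGS, hG⟩ := hY
  refine ⟨F ∪ G, by simpa using And.intro hFS hGS, union_subset ?_ ?_⟩
  · exact hF.trans (biUnion_subset_biUnion_left (by simp))
  · exact hG.trans (biUnion_subset_biUnion_left (by simp))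

lemma biUnion {κ : Type*} (K : Finset κ) {X : κ → Set α}
    (h : ∀ k ∈ K, FinitelyCovered f S (X k)) : FinitelyCovered f S (⋃ k ∈ K, X k) := by
  classical
  induction K using Finset.induction_on with
  | empty => exact ⟨∅, by simp, by simp⟩
  | insert k K _ ih =>
    rw [Finset.set_biUnion_insert]
    exact (h k (by simp)).union (ih fun j hj => h j (by simp [hj]))

end FinitelyCovered

/-- `α ∈ hatA a β` unfolds to `α ≤ β ∧ SmallBelow a α (a α \ a β)`. -/
def SmallBelow (a : Ordinal → Set ℕ) (α : Ordinal) (s : Set ℕ) : Prop :=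
  ∃ F : Finset Ordinal, (∀ γ ∈ F, γ < α) ∧ s ⊆ unionFin a F

namespace SmallBelow

variable {a : Ordinal → Set ℕ} {α : Ordinal} {s t : Set ℕ}

lemma of_lt {κ : Ordinal} (h : κ < α) : SmallBelow a α (a κ) :=
  ⟨{κ}, by simpa using h, by simp [unionFin]⟩

lemma mono (h : SmallBelow a α t) (hst : s ⊆ t) : SmallBelow a α s :=
  let ⟨F, hF, ht⟩ := h
  ⟨F, hF, hst.trans ht⟩

lemma union (hs : SmallBelow a α s) (ht : SmallBelow a α t) : SmallBelow a α (s ∪ t) := by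
  classical
  obtain ⟨F, hF, hsF⟩ := hs
  obtain ⟨G, hG, htG⟩ := ht
  refine ⟨F ∪ G, fun γ hγ => (Finset.mem_union.1 hγ).elim (hF γ) (hG γ), ?_⟩
  simp only [unionFin, Finset.set_biUnion_union] at hsF htG ⊢
  exact union_subset_union hsF htG

lemma biUnion {κ : Type*} (K : Finset κ) {s : κ → Set ℕ}
    (h : ∀ k ∈ K, SmallBelow a α (s k)) : SmallBelow a α (⋃ k ∈ K, s k) := by
  classical
  induction K using Finset.induction_on with
  | empty => exact ⟨∅, by simp, by simp⟩
  | insert k K _ ih =>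
    rw [Finset.set_biUnion_insert]
    exact (h k (by simp)).union (ih fun j hj => h j (by simp [hj]))

end SmallBelow

lemma mem_hatA_self (a : Ordinal → Set ℕ) (γ : Ordinal) : γ ∈ hatA a γ :=
  ⟨le_rfl, ∅, by simp, by simp⟩

lemma CoherentOn.smallBelow_inter_or_mem_hatA {D : Set Ordinal} {a : Ordinal → Set ℕ}
    (hcoh : CoherentOn D a) {α β : Ordinal} (hαβ : α ≤ β) (hβ : β ∈ D) :
    SmallBelow a α (a α ∩ a β) ∨ α ∈ hatA a β := by
  obtain ⟨F, hF, hinter | hsub⟩ := hcoh α β hαβ hβ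
  · exact Or.inl ⟨F, hF, hinter⟩
  · exact Or.inr ⟨hαβ, F, hF, fun x hx => (hsub hx.1).resolve_left hx.2⟩

lemma hatA_subset_of_diff_subset_unionFin {D : Set Ordinal} {a : Ordinal → Set ℕ}
    (hcoh : CoherentOn D a) {γ δ : Ordinal} {K : Finset Ordinal} (hK : ∀ κ ∈ K, κ ∈ D)
    (hγδ : γ ≤ δ) (hdiff : a γ \ a δ ⊆ unionFin a K) :
    hatA a γ ⊆ hatA a δ ∪ ⋃ κ ∈ K, hatA a κ := by
  rintro α ⟨hαγ, hsmall⟩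
  change SmallBelow a α (a α \ a γ) at hsmall
  by_cases hK' : ∃ κ ∈ K, α ∈ hatA a κ
  · obtain ⟨κ, hκ, hα⟩ := hK'
    exact Or.inr (mem_biUnion hκ hα)
  push Not at hK'
  have hpiece : ∀ κ ∈ K, SmallBelow a α (a α ∩ a κ) := by
    intro κ hκ
    rcases lt_or_ge κ α with hκα | hακ
    · exact (SmallBelow.of_lt hκα).mono inter_subset_right
    · exact (hcoh.smallBelow_inter_or_mem_hatA hακ (hK κ hκ)).resolve_right (hK' κ hκ)
  have hcover : a α \ a δ ⊆ (a α \ a γ) ∪ ⋃ κ ∈ K, a α ∩ a κ := by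
    rintro x ⟨hxα, hxδ⟩
    by_cases hxγ : x ∈ a γ
    · obtain ⟨κ, hκ, hxκ⟩ := mem_iUnion₂.1 (hdiff ⟨hxγ, hxδ⟩)
      exact Or.inr (mem_biUnion hκ ⟨hxα, hxκ⟩)
    · exact Or.inl ⟨hxα, hxγ⟩
  exact Or.inl ⟨hαγ.trans hγδ, (hsmall.union (SmallBelow.biUnion K hpiece)).mono hcover⟩

lemma finitelyCovered_hatA_of_subset_biUnion {a : Ordinal → Set ℕ} {lam : Ordinal}
    (hcoh : CoherentOn (Iio lam) a) {S : Set Ordinal}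
    (hS : Iio lam ⊆ ⋃ δ ∈ S, hatA a δ) {γ : Ordinal} (hγ : γ < lam) :
    FinitelyCovered (hatA a) S (hatA a γ) := by
  induction γ using WellFoundedLT.induction with
  | ind γ ih =>
    obtain ⟨δ, hδS, hγδ, K, hKγ, hdiff⟩ := mem_iUnion₂.1 (hS hγ)
    have hKlam : ∀ κ ∈ K, κ ∈ Iio lam := fun κ hκ => (hKγ κ hκ).trans hγ
    refine ((FinitelyCovered.of_mem hδS).union (FinitelyCovered.biUnion K fun κ hκ =>
      ih κ (hKγ κ hκ) (hKlam κ hκ))).mono ?_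
    exact hatA_subset_of_diff_subset_unionFin hcoh hKlam hγδ hdiff

theorem stmt10_general (a : Ordinal → Set ℕ)
    (hcoh : CoherentOn (Iio omega1) a)
    (hScP : HasScP (Iio omega1) a)
    (S : Set Ordinal)
    (hcover : (⋃ γ ∈ S, hatA a γ) = Iio omega1)
    (S' : Set Ordinal) (hS' : S' ⊆ Iio omega1) (hstat : IsStationaryOmega1 S') :
    ∃ F : Finset Ordinal, (↑F : Set Ordinal) ⊆ S ∧
      (⋃ γ ∈ S' ∪ (↑F : Set Ordinal), hatA a γ) = Iio omega1 := by
  obtain ⟨F₀, hF₀⟩ := hScP subset_rfl S' hS' hstat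
  have hF₀lt : ∀ γ ∈ F₀, γ < omega1 := fun γ hγ => by
    have hγ' := mem_biUnion (show γ ∈ S' ∪ ↑F₀ from Or.inr hγ) (mem_hatA_self a γ)
    rwa [hF₀] at hγ'
  obtain ⟨F, hFS, hF₀F⟩ := FinitelyCovered.biUnion F₀ fun γ hγ =>
    finitelyCovered_hatA_of_subset_biUnion hcoh hcover.ge (hF₀lt γ hγ)
  refine ⟨F, hFS, ?_⟩
  rw [biUnion_union] at hF₀ ⊢
  refine subset_antisymm (union_subset ?_ ?_) ?_
  · exact hF₀ ▸ subset_union_left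
  · exact hcover ▸ biUnion_subset_biUnion_left hFS
  · exact hF₀ ▸ union_subset_union_right _ hF₀F

/-- For a proper coherent `ω₁`-sequence with the ScP: if `S ⊆ ω₁` is a cover, then
for every stationary `S' ⊆ ω₁` there is a finite `F ⊆ S` such that `S' ∪ F` is a
cover. -/
theorem stmt10 (a : Ordinal → Set ℕ)
    (hcoh : CoherentOn (Iio omega1) a) (hprop : ProperOn (Iio omega1) a)
    (hScP : HasScP (Iio omega1) a)
    (S : Set Ordinal) (hS : S ⊆ Iio omega1)
    (hcover : (⋃ γ ∈ S, hatA a γ) = Iio omega1)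
    (S' : Set Ordinal) (hS' : S' ⊆ Iio omega1) (hstat : IsStationaryOmega1 S') :
    ∃ F : Finset Ordinal, (↑F : Set Ordinal) ⊆ S ∧
      (⋃ γ ∈ S' ∪ (↑F : Set Ordinal), hatA a γ) = Iio omega1 :=
  stmt10_general a hcoh hScP S hcover S' hS' hstat

end
end

section
/- If A = ⟨a_α : α < ω₁⟩ is a proper coherent sequence of subsets of ℕ, then every point α < ω₁ of the space (ω₁+1, τ(A)) has a countable neighborhood base; in particular the subspace ω₁ of (ω₁+1, τ(A)) is first countable. -/
open Set

noncomputable section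

/-! For `y < λ` the sets `â_y ∖ ⋃_{γ ∈ F} â_γ`, `F ⊆ y` finite, form a neighbourhood base at `y`
in `τ(A)`. They are open, and the point is that they refine every subbasic set containing `y`.
Coherence gives the basic fact: if `x ∉ â_γ`, then `a x ∩ a γ` is covered by finitely many
`a η`, `η < x`. Now if `y ∈ â_β` because `a y ∖ a β ⊆ ⋃_{γ ∈ G} a γ`, then for `x` in the set
for `G` also `a x ∖ a β` is covered below `x`, i.e. `x ∈ â_β`. If `y ∉ â_β`, coherence covers
`a y ∩ a β` by some `⋃_{γ ∈ F} a γ`, `F ⊆ y`, and a point `x` of the set for `F` lying in `â_β`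
would have `a x` covered below `x`, contradicting properness. For `y < ω₁` there are only
countably many finite `F ⊆ y`. -/

open Filter Topology

theorem unionFin_union (a : Ordinal → Set ℕ) (F G : Finset Ordinal) :
    unionFin a (F ∪ G) = unionFin a F ∪ unionFin a G :=
  Finset.set_biUnion_union F G a

theorem unionFin_singleton (a : Ordinal → Set ℕ) (γ : Ordinal) : unionFin a {γ} = a γ := by
  simp [unionFin]

def CoveredBelow (a : Ordinal → Set ℕ) (α : Ordinal) (s : Set ℕ) : Prop :=
  ∃ F : Finset Ordinal, (∀ γ ∈ F, γ < α) ∧ s ⊆ unionFin a F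

section CoveredBelow

variable {a : Ordinal → Set ℕ} {α : Ordinal} {s t : Set ℕ}

theorem CoveredBelow.mono (h : CoveredBelow a α t) (hst : s ⊆ t) : CoveredBelow a α s :=
  let ⟨F, hF, hcov⟩ := h
  ⟨F, hF, hst.trans hcov⟩

theorem CoveredBelow.union (hs : CoveredBelow a α s) (ht : CoveredBelow a α t) :
    CoveredBelow a α (s ∪ t) := by
  obtain ⟨F, hF, hsF⟩ := hs
  obtain ⟨G, hG, htG⟩ := ht
  refine ⟨F ∪ G, fun γ hγ => ?_, ?_⟩
  · rcases Finset.mem_union.1 hγ with h | h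
    exacts [hF γ h, hG γ h]
  · rw [unionFin_union]
    exact union_subset_union hsF htG

theorem coveredBelow_of_lt {γ : Ordinal} (hγ : γ < α) (hs : s ⊆ a γ) : CoveredBelow a α s :=
  ⟨{γ}, by simpa using hγ, by rwa [unionFin_singleton]⟩

end CoveredBelow

theorem mem_hatA_iff {a : Ordinal → Set ℕ} {α β : Ordinal} :
    α ∈ hatA a β ↔ α ≤ β ∧ CoveredBelow a α (a α \ a β) :=
  Iff.rfl

theorem self_mem_hatA (a : Ordinal → Set ℕ) (β : Ordinal) : β ∈ hatA a β :=
  ⟨le_rfl, ∅, by simp, by simp⟩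

theorem ProperOn.not_coveredBelow {D : Set Ordinal} {a : Ordinal → Set ℕ} (h : ProperOn D a)
    {β : Ordinal} (hβ : β ∈ D) : ¬ CoveredBelow a β (a β) :=
  fun ⟨F, hF, hcov⟩ => h β hβ F hF hcov

theorem CoherentOn.coveredBelow_inter_or_diff {D : Set Ordinal} {a : Ordinal → Set ℕ}
    (h : CoherentOn D a) {α β : Ordinal} (hαβ : α ≤ β) (hβ : β ∈ D) :
    CoveredBelow a α (a α ∩ a β) ∨ CoveredBelow a α (a α \ a β) := by
  obtain ⟨F, hF, hinter | hsub⟩ := h α β hαβ hβ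
  · exact Or.inl ⟨F, hF, hinter⟩
  · refine Or.inr ⟨F, hF, fun n ⟨hnα, hnβ⟩ => ?_⟩
    exact (hsub hnα).resolve_left hnβ

section Coherent

variable {lam : Ordinal} {a : Ordinal → Set ℕ}

theorem coveredBelow_inter_of_notMem_hatA (hcoh : CoherentOn (Iio lam) a) {x γ : Ordinal}
    (hγ : γ < lam) (hx : x ∉ hatA a γ) : CoveredBelow a x (a x ∩ a γ) := by
  rcases le_or_gt x γ with hxγ | hγx
  · exact (hcoh.coveredBelow_inter_or_diff hxγ hγ).resolve_right fun hdiff => hx ⟨hxγ, hdiff⟩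
  · exact coveredBelow_of_lt hγx inter_subset_right

theorem coveredBelow_inter_unionFin_of_forall_notMem_hatA (hcoh : CoherentOn (Iio lam) a)
    {x : Ordinal} {G : Finset Ordinal} (hG : ∀ γ ∈ G, γ < lam)
    (hx : ∀ γ ∈ G, x ∉ hatA a γ) : CoveredBelow a x (a x ∩ unionFin a G) := by
  induction G using Finset.induction_on with
  | empty => exact ⟨∅, by simp, by simp [unionFin]⟩
  | insert γ G _ ih =>
    have hγ := coveredBelow_inter_of_notMem_hatA hcoh (hG γ (G.mem_insert_self γ))
      (hx γ (G.mem_insert_self γ))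
    have hG' := ih (fun η hη => hG η (Finset.mem_insert_of_mem hη))
      (fun η hη => hx η (Finset.mem_insert_of_mem hη))
    rw [Finset.insert_eq, unionFin_union, unionFin_singleton, inter_union_distrib_left]
    exact hγ.union hG'

theorem mem_hatA_of_mem_hatA_of_forall_notMem (hcoh : CoherentOn (Iio lam) a)
    {x y β : Ordinal} {G : Finset Ordinal} (hyβ : y ≤ β) (hG : ∀ γ ∈ G, γ < lam)
    (hyG : a y \ a β ⊆ unionFin a G) (hx : x ∈ hatA a y) (hxG : ∀ γ ∈ G, x ∉ hatA a γ) :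
    x ∈ hatA a β := by
  obtain ⟨hxy, hxy'⟩ := mem_hatA_iff.1 hx
  refine ⟨hxy.trans hyβ, (hxy'.union
    (coveredBelow_inter_unionFin_of_forall_notMem_hatA hcoh hG hxG)).mono ?_⟩
  rintro n ⟨hnx, hnβ⟩
  by_cases hny : n ∈ a y
  · exact Or.inr ⟨hnx, hyG ⟨hny, hnβ⟩⟩
  · exact Or.inl ⟨hnx, hny⟩

theorem notMem_hatA_of_inter_subset (hcoh : CoherentOn (Iio lam) a)
    (hprop : ProperOn (Iio lam) a) {x y β : Ordinal} {F : Finset Ordinal} (hβ : β < lam)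
    (hF : ∀ γ ∈ F, γ < lam) (hyF : a y ∩ a β ⊆ unionFin a F) (hx : x ∈ hatA a y)
    (hxF : ∀ γ ∈ F, x ∉ hatA a γ) : x ∉ hatA a β := by
  intro hxβ
  obtain ⟨-, hxy⟩ := mem_hatA_iff.1 hx
  obtain ⟨hxβle, hxβ'⟩ := mem_hatA_iff.1 hxβ
  apply hprop.not_coveredBelow (hxβle.trans_lt hβ)
  refine ((hxy.union hxβ').union
    (coveredBelow_inter_unionFin_of_forall_notMem_hatA hcoh hF hxF)).mono fun n hnx => ?_
  by_cases hny : n ∈ a y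
  · by_cases hnβ : n ∈ a β
    · exact Or.inr ⟨hnx, hyF ⟨hny, hnβ⟩⟩
    · exact Or.inl (Or.inr ⟨hnx, hnβ⟩)
  · exact Or.inl (Or.inl ⟨hnx, hny⟩)

end Coherent

def hatNbhd (a : Ordinal → Set ℕ) (y : Ordinal) (F : Finset Ordinal) : Set Ordinal :=
  hatA a y \ ⋃ γ ∈ F, hatA a γ

section Nbhd

variable {lam : Ordinal} {a : Ordinal → Set ℕ} {y : Ordinal} {F : Finset Ordinal}

theorem mem_hatNbhd_self (hF : ∀ γ ∈ F, γ < y) : y ∈ hatNbhd a y F := by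
  refine ⟨self_mem_hatA a y, ?_⟩
  simp only [mem_iUnion, not_exists]
  exact fun γ hγ hyγ => (hF γ hγ).not_ge hyγ.1

theorem hatNbhd_anti {G : Finset Ordinal} (hFG : F ⊆ G) : hatNbhd a y G ⊆ hatNbhd a y F :=
  sdiff_subset_sdiff_right (biUnion_subset_biUnion_left (Finset.coe_subset.2 hFG))

theorem isOpen_hatNbhd (hy : y < lam) (hF : ∀ γ ∈ F, γ < lam) :
    @IsOpen _ (tau lam a) (Subtype.val ⁻¹' hatNbhd a y F) := by
  let _ := tau lam a
  have hsub : ∀ β < lam, IsOpen {x : {α : Ordinal // α ≤ lam} | x.1 ∈ hatA a β} ∧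
      IsOpen {x : {α : Ordinal // α ≤ lam} | x.1 ∈ hatA a β}ᶜ := fun β hβ =>
    ⟨TopologicalSpace.isOpen_generateFrom_of_mem ⟨β, hβ, Or.inl rfl⟩,
      TopologicalSpace.isOpen_generateFrom_of_mem ⟨β, hβ, Or.inr rfl⟩⟩
  rw [hatNbhd, preimage_sdiff, preimage_iUnion₂, sdiff_eq, compl_iUnion₂]
  exact (hsub y hy).1.inter (isOpen_biInter_finset fun γ hγ => (hsub γ (hF γ hγ)).2)

theorem exists_hatNbhd_subset_hatA (hcoh : CoherentOn (Iio lam) a) {β : Ordinal}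
    (hβ : β < lam) (hy : y ∈ hatA a β) :
    ∃ F : Finset Ordinal, (∀ γ ∈ F, γ < y) ∧ hatNbhd a y F ⊆ hatA a β := by
  obtain ⟨hyβ, G, hG, hyG⟩ := hy
  refine ⟨G, hG, fun x ⟨hx, hxG⟩ => ?_⟩
  simp only [mem_iUnion, not_exists] at hxG
  exact mem_hatA_of_mem_hatA_of_forall_notMem hcoh hyβ
    (fun γ hγ => ((hG γ hγ).trans_le hyβ).trans hβ) hyG hx hxG

theorem exists_hatNbhd_subset_compl_hatA (hcoh : CoherentOn (Iio lam) a)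
    (hprop : ProperOn (Iio lam) a) (hy : y < lam) {β : Ordinal} (hβ : β < lam)
    (hyβ : y ∉ hatA a β) :
    ∃ F : Finset Ordinal, (∀ γ ∈ F, γ < y) ∧ hatNbhd a y F ⊆ (hatA a β)ᶜ := by
  obtain ⟨F, hF, hyF⟩ := coveredBelow_inter_of_notMem_hatA hcoh hβ hyβ
  refine ⟨F, hF, fun x ⟨hx, hxF⟩ => ?_⟩
  simp only [mem_iUnion, not_exists] at hxF
  exact notMem_hatA_of_inter_subset hcoh hprop hβ (fun γ hγ => (hF γ hγ).trans hy) hyF hx hxF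

theorem nhds_hasBasis_hatNbhd (hcoh : CoherentOn (Iio lam) a) (hprop : ProperOn (Iio lam) a)
    (y : {α : Ordinal // α ≤ lam}) (hy : y.1 < lam) :
    (@nhds _ (tau lam a) y).HasBasis (fun F : Finset Ordinal => ∀ γ ∈ F, γ < y.1)
      (fun F => Subtype.val ⁻¹' hatNbhd a y.1 F) := by
  let _ := tau lam a
  let bas : Finset Ordinal → Set {α : Ordinal // α ≤ lam} :=
    fun F => Subtype.val ⁻¹' hatNbhd a y.1 F
  have hdir : DirectedOn (bas ⁻¹'o (· ⊇ ·))
      {F : Finset Ordinal | ∀ γ ∈ F, γ < y.1} := fun F hF G hG =>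
    ⟨F ∪ G, fun γ hγ => (Finset.mem_union.1 hγ).elim (hF γ) (hG γ),
      preimage_mono (hatNbhd_anti Finset.subset_union_left),
      preimage_mono (hatNbhd_anti Finset.subset_union_right)⟩
  have hbasis := hasBasis_biInf_principal hdir ⟨∅, by simp⟩
  suffices h : nhds y = ⨅ F ∈ {F : Finset Ordinal | ∀ γ ∈ F, γ < y.1}, 𝓟 (bas F) by
    rw [h]; exact hbasis
  refine le_antisymm (le_iInf₂ fun F hF => le_principal_iff.2 ?_) ?_
  · exact (isOpen_hatNbhd hy fun γ hγ => (hF γ hγ).trans hy).mem_nhds (mem_hatNbhd_self hF)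
  · rw [show nhds y = @nhds _ (TopologicalSpace.generateFrom _) y from rfl,
      TopologicalSpace.nhds_generateFrom]
    refine le_iInf₂ fun s ⟨hys, β, hβ, hs⟩ => le_principal_iff.2 (hbasis.mem_iff.2 ?_)
    rcases hs with rfl | rfl
    · obtain ⟨F, hF, hsub⟩ := exists_hatNbhd_subset_hatA hcoh hβ hys
      exact ⟨F, hF, preimage_mono hsub⟩
    · obtain ⟨F, hF, hsub⟩ := exists_hatNbhd_subset_compl_hatA hcoh hprop hy hβ hys
      exact ⟨F, hF, preimage_mono hsub⟩

end Nbhd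

theorem countable_Iio_of_lt_omega1 {y : Ordinal} (hy : y < omega1) : (Iio y).Countable := by
  rw [← Cardinal.le_aleph0_iff_set_countable, Cardinal.mk_Iio_ordinal, Cardinal.lift_le_aleph0,
    ← Cardinal.lt_aleph_one_iff, ← Cardinal.lt_ord]
  exact hy

theorem countable_setOf_finset_lt_of_lt_omega1 {y : Ordinal} (hy : y < omega1) :
    {F : Finset Ordinal | ∀ γ ∈ F, γ < y}.Countable := by
  have h := (countable_ofPred_finite_subset (countable_Iio_of_lt_omega1 hy)).preimage
    (Finset.coe_injective (α := Ordinal))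
  simpa [subset_def] using h

theorem exists_countable_open_base_of_hasCountableBasis {X ι : Type*} [TopologicalSpace X]
    {x : X} {p : ι → Prop} {s : ι → Set X} (h : (𝓝 x).HasCountableBasis p s)
    (hopen : ∀ i, p i → IsOpen (s i)) :
    ∃ 𝓑 : Set (Set X), 𝓑.Countable ∧ (∀ U ∈ 𝓑, IsOpen U ∧ x ∈ U) ∧
      ∀ V, IsOpen V → x ∈ V → ∃ U ∈ 𝓑, U ⊆ V := by
  refine ⟨s '' {i | p i}, h.countable.image s, ?_, fun V hV hxV => ?_⟩
  · rintro _ ⟨i, hi, rfl⟩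
    exact ⟨hopen i hi, mem_of_mem_nhds (h.mem_of_mem hi)⟩
  · obtain ⟨i, hi, hsub⟩ := h.mem_iff.1 (hV.mem_nhds hxV)
    exact ⟨s i, mem_image_of_mem s hi, hsub⟩

/-- For a proper coherent `ω₁`-sequence `A`, every point `α < ω₁` of
`(ω₁+1, τ(A))` has a countable neighborhood base; in particular the subspace `ω₁`
of `(ω₁+1, τ(A))` is first countable. -/
theorem stmt15 (a : Ordinal → Set ℕ)
    (hcoh : CoherentOn (Iio omega1) a) (hprop : ProperOn (Iio omega1) a) :
    (∀ y : {α : Ordinal // α ≤ omega1}, y.1 < omega1 →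
      ∃ 𝓑 : Set (Set {α : Ordinal // α ≤ omega1}), 𝓑.Countable ∧
        (∀ U ∈ 𝓑, @IsOpen _ (tau omega1 a) U ∧ y ∈ U) ∧
        (∀ V : Set {α : Ordinal // α ≤ omega1},
          @IsOpen _ (tau omega1 a) V → y ∈ V → ∃ U ∈ 𝓑, U ⊆ V)) ∧
    @FirstCountableTopology {y : Ordinal // y < omega1} (tauSub a) := by
  let _ := tau omega1 a
  have hbasis (y : {α : Ordinal // α ≤ omega1}) (hy : y.1 < omega1) :
      (𝓝 y).HasCountableBasis (fun F : Finset Ordinal => ∀ γ ∈ F, γ < y.1)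
        (fun F => Subtype.val ⁻¹' hatNbhd a y.1 F) :=
    ⟨nhds_hasBasis_hatNbhd hcoh hprop y hy, countable_setOf_finset_lt_of_lt_omega1 hy⟩
  refine ⟨fun y hy => exists_countable_open_base_of_hasCountableBasis (hbasis y hy)
    fun F hF => isOpen_hatNbhd hy fun γ hγ => (hF γ hγ).trans hy, ?_⟩
  refine @FirstCountableTopology.mk _ (tauSub a) fun z => ?_
  rw [tauSub, nhds_induced]
  have := (hbasis ⟨z.1, z.2.le⟩ z.2).isCountablyGenerated
  exact Filter.comap.isCountablyGenerated _ _
end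
end
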